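/- Let λ > 0. Define u : (0,∞) → ℝ by u(x) := √x · I(1/6, (√λ/3)·x³), where I(ν,z) := (1/π)·∫₀^π exp(z·cos θ)·cos(ν·θ) dθ − (sin(νπ)/π)·∫₀^∞ exp(−z·cosh t − ν·t) dt. Then u is twice differentiable on (0,∞) and satisfies u″(x) = λ·x⁴·u(x) for every x > 0. -/

import Mathlib

open Set Real

/-- Modified Bessel function of the first kind (integral representation):
`I(ν, z) = (1/π) ∫₀^π e^(z cos θ) cos(ν θ) dθ − (sin(νπ)/π) ∫₀^∞ e^(−z cosh t − νt) dt`. -/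
noncomputable def besselI (ν z : ℝ) : ℝ :=
  (1 / π) * (∫ θ in (0 : ℝ)..π, Real.exp (z * Real.cos θ) * Real.cos (ν * θ)) -
    (Real.sin (ν * π) / π) *
      ∫ t in Set.Ioi (0 : ℝ), Real.exp (-z * Real.cosh t - ν * t)

/-!
Write `I(ν, z) = (A₀(z) - sin(νπ) B₀(z)) / π` with the moments
`A_k(z) = ∫₀^π cos^k θ e^{z cos θ} cos(νθ) dθ` and `B_k(z) = ∫₀^∞ cosh^k t e^{-z cosh t - νt} dt`.
Differentiating under the integral sign gives `A_k' = A_{k+1}` and `B_k' = -B_{k+1}`, and the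
combinations `z²A₂ + zA₁ - (z²+ν²)A₀` and `z²B₂ - zB₁ - (z²+ν²)B₀` are integrals of exact
derivatives, with values `-ν sin(νπ) e^{-z}` and `-ν e^{-z}`. These boundary terms cancel in `I`,
so `I` solves the modified Bessel equation `z²I'' + zI' - (z²+ν²)I = 0`. Finally the substitution
`u(x) = √x f(c x^m)` turns that equation with `ν = 1/(2m)` into `u'' = (m c x^{m-1})² u`;
for `m = 3` and `c = √λ/3` this is `u'' = λx⁴u`.
-/

open MeasureTheory Filter
open scoped Nat

noncomputable def cosMoment (ν : ℝ) (k : ℕ) (z : ℝ) : ℝ :=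
  ∫ θ in (0 : ℝ)..π, cos θ ^ k * (exp (z * cos θ) * cos (ν * θ))

noncomputable def coshMoment (ν : ℝ) (k : ℕ) (z : ℝ) : ℝ :=
  ∫ t in Ioi (0 : ℝ), cosh t ^ k * exp (-z * cosh t - ν * t)

lemma self_le_cosh (t : ℝ) : t ≤ cosh t := by
  rcases le_total 0 t with ht | ht
  · exact (self_le_sinh_iff.2 ht).trans (sinh_lt_cosh t).le
  · linarith [cosh_pos t]

lemma pow_cosh_mul_exp_neg_le {b : ℝ} (hb : 0 < b) (k : ℕ) (t : ℝ) :
    cosh t ^ k * exp (-b * cosh t) ≤ k ! * (2 / b) ^ k * exp (-(b / 2) * t) := by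
  have hpow : cosh t ^ k ≤ k ! * (2 / b) ^ k * exp (b / 2 * cosh t) := by
    have h := pow_div_factorial_le_exp (x := b / 2 * cosh t) (by positivity) k
    rw [div_le_iff₀ (by positivity)] at h
    calc cosh t ^ k = (2 / b) ^ k * (b / 2 * cosh t) ^ k := by
          rw [← mul_pow]; field_simp
      _ ≤ (2 / b) ^ k * (exp (b / 2 * cosh t) * k !) := by gcongr
      _ = _ := by ring
  calc cosh t ^ k * exp (-b * cosh t)
      ≤ k ! * (2 / b) ^ k * exp (b / 2 * cosh t) * exp (-b * cosh t) := by gcongr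
    _ = k ! * (2 / b) ^ k * exp (-(b / 2) * cosh t) := by
          rw [mul_assoc, ← exp_add]; ring_nf
    _ ≤ _ := by
          gcongr k ! * (2 / b) ^ k * exp ?_
          nlinarith [self_le_cosh t]

lemma norm_pow_cosh_mul_exp_le {ν b x t : ℝ} (hν : 0 ≤ ν) (hb : 0 < b) (hbx : b ≤ x)
    (ht : 0 ≤ t) (k : ℕ) :
    ‖cosh t ^ k * exp (-x * cosh t - ν * t)‖ ≤ k ! * (2 / b) ^ k * exp (-(b / 2) * t) := by
  rw [norm_of_nonneg (by positivity)]
  calc cosh t ^ k * exp (-x * cosh t - ν * t) ≤ cosh t ^ k * exp (-b * cosh t) := by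
        gcongr; nlinarith [one_le_cosh t]
    _ ≤ _ := pow_cosh_mul_exp_neg_le hb k t

lemma integrableOn_pow_cosh_mul_exp {ν z : ℝ} (hν : 0 ≤ ν) (hz : 0 < z) (k : ℕ) :
    IntegrableOn (fun t => cosh t ^ k * exp (-z * cosh t - ν * t)) (Ioi 0) := by
  refine ((exp_neg_integrableOn_Ioi 0 (half_pos hz)).const_mul (k ! * (2 / z) ^ k)).mono'
    (by fun_prop) ?_
  filter_upwards [ae_restrict_mem measurableSet_Ioi] with t ht
  exact norm_pow_cosh_mul_exp_le hν hz le_rfl (le_of_lt ht) k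

lemma hasDerivAt_cosMoment (ν : ℝ) (k : ℕ) (z : ℝ) :
    HasDerivAt (cosMoment ν k) (cosMoment ν (k + 1) z) z := by
  refine (intervalIntegral.hasDerivAt_integral_of_dominated_loc_of_deriv_le
    (F := fun x θ => cos θ ^ k * (exp (x * cos θ) * cos (ν * θ)))
    (F' := fun x θ => cos θ ^ (k + 1) * (exp (x * cos θ) * cos (ν * θ)))
    (bound := fun _ => exp (|z| + 1)) (Metric.ball_mem_nhds z one_pos)
    (.of_forall fun _ => by fun_prop) (Continuous.intervalIntegrable (by fun_prop) _ _)
    (by fun_prop) ?_ intervalIntegrable_const ?_).2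
  · refine .of_forall fun θ _ x hx => ?_
    have hx : |x| ≤ |z| + 1 := by
      have := abs_sub_abs_le_abs_sub x z
      rw [Metric.mem_ball, dist_eq] at hx; linarith
    have hcos := abs_cos_le_one θ
    rw [norm_mul, norm_mul, norm_pow, norm_of_nonneg (exp_pos _).le, norm_eq_abs, norm_eq_abs]
    calc |cos θ| ^ (k + 1) * (exp (x * cos θ) * |cos (ν * θ)|) ≤ 1 * (exp (|z| + 1) * 1) := by
          gcongr
          · exact pow_le_one₀ (abs_nonneg _) hcos
          · calc x * cos θ ≤ |x| * |cos θ| := by rw [← abs_mul]; exact le_abs_self _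
              _ ≤ (|z| + 1) * 1 := by gcongr
              _ = |z| + 1 := mul_one _
          · exact abs_cos_le_one _
      _ = exp (|z| + 1) := by ring
  · refine .of_forall fun θ _ x _ => ?_
    exact (((hasDerivAt_mul_const (cos θ)).exp.mul_const _).const_mul _).congr_deriv (by ring)

lemma hasDerivAt_coshMoment {ν : ℝ} (hν : 0 ≤ ν) (k : ℕ) {z : ℝ} (hz : 0 < z) :
    HasDerivAt (coshMoment ν k) (-coshMoment ν (k + 1) z) z := by
  have hs : Ioi (z / 2) ∈ nhds z := Ioi_mem_nhds (half_lt_self hz)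
  have key := hasDerivAt_integral_of_dominated_loc_of_deriv_le
    (μ := volume.restrict (Ioi 0))
    (F := fun x t => cosh t ^ k * exp (-x * cosh t - ν * t))
    (F' := fun x t => -(cosh t ^ (k + 1) * exp (-x * cosh t - ν * t)))
    (bound := fun t => (k + 1)! * (2 / (z / 2)) ^ (k + 1) * exp (-(z / 2 / 2) * t)) hs
    (.of_forall fun _ => by fun_prop) (integrableOn_pow_cosh_mul_exp hν hz k) (by fun_prop)
    ?_ ((exp_neg_integrableOn_Ioi 0 (by positivity)).const_mul _) ?_
  · rw [coshMoment, ← integral_neg]; exact key.2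
  · filter_upwards [ae_restrict_mem measurableSet_Ioi] with t ht x hx
    rw [norm_neg]
    exact norm_pow_cosh_mul_exp_le hν (half_pos hz) (le_of_lt hx) (le_of_lt ht) (k + 1)
  · refine .of_forall fun t x _ => ?_
    have h : HasDerivAt (fun x => -x * cosh t - ν * t) (-cosh t) x := by
      simpa using ((hasDerivAt_neg x).mul_const (cosh t)).sub_const (ν * t)
    exact (h.exp.const_mul _).congr_deriv (by ring)

lemma cosMoment_bessel_combination (ν z : ℝ) :
    z ^ 2 * cosMoment ν 2 z + z * cosMoment ν 1 z - (z ^ 2 + ν ^ 2) * cosMoment ν 0 z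
      = -(ν * sin (ν * π) * exp (-z)) := by
  have hG : ∀ θ ∈ uIcc 0 π, HasDerivAt
      (fun θ => z * sin θ * exp (z * cos θ) * cos (ν * θ) - ν * exp (z * cos θ) * sin (ν * θ))
      ((z ^ 2 * cos θ ^ 2 + z * cos θ - (z ^ 2 + ν ^ 2)) * (exp (z * cos θ) * cos (ν * θ))) θ := by
    intro θ _
    have hE : HasDerivAt (fun θ => exp (z * cos θ)) (exp (z * cos θ) * (z * -sin θ)) θ :=
      ((hasDerivAt_cos θ).const_mul z).exp
    have hC : HasDerivAt (fun θ => cos (ν * θ)) (-sin (ν * θ) * ν) θ :=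
      (hasDerivAt_cos (ν * θ)).comp θ (hasDerivAt_const_mul ν)
    have hS : HasDerivAt (fun θ => sin (ν * θ)) (cos (ν * θ) * ν) θ :=
      (hasDerivAt_sin (ν * θ)).comp θ (hasDerivAt_const_mul ν)
    refine ((((hasDerivAt_sin θ).const_mul z).mul hE).mul hC |>.sub
      ((hE.const_mul ν).mul hS)).congr_deriv ?_
    simp only [Pi.mul_apply]
    linear_combination (-z ^ 2 * exp (z * cos θ) * cos (ν * θ)) * sin_sq_add_cos_sq θ
  have hlin : z ^ 2 * cosMoment ν 2 z + z * cosMoment ν 1 z - (z ^ 2 + ν ^ 2) * cosMoment ν 0 z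
      = ∫ θ in (0 : ℝ)..π,
          (z ^ 2 * cos θ ^ 2 + z * cos θ - (z ^ 2 + ν ^ 2)) * (exp (z * cos θ) * cos (ν * θ)) := by
    simp only [cosMoment, ← intervalIntegral.integral_const_mul]
    rw [← intervalIntegral.integral_add, ← intervalIntegral.integral_sub]
    · congr 1; ext θ; ring
    all_goals exact Continuous.intervalIntegrable (by fun_prop) _ _
  rw [hlin, intervalIntegral.integral_eq_sub_of_hasDerivAt hG
    (Continuous.intervalIntegrable (by fun_prop) _ _)]
  simp only [sin_pi, cos_pi, sin_zero, cos_zero, mul_zero, zero_mul, mul_neg, mul_one,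
    sub_zero, zero_sub]
  ring

lemma coshMoment_bessel_combination {ν z : ℝ} (hν : 0 ≤ ν) (hz : 0 < z) :
    z ^ 2 * coshMoment ν 2 z - z * coshMoment ν 1 z - (z ^ 2 + ν ^ 2) * coshMoment ν 0 z
      = -(ν * exp (-z)) := by
  set H := fun t => (ν - z * sinh t) * exp (-z * cosh t - ν * t)
  have hH : ∀ t, HasDerivAt H
      ((z ^ 2 * cosh t ^ 2 - z * cosh t - (z ^ 2 + ν ^ 2)) * exp (-z * cosh t - ν * t)) t := by
    intro t
    have h1 : HasDerivAt (fun t => ν - z * sinh t) (-(z * cosh t)) t :=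
      ((hasDerivAt_sinh t).const_mul z).const_sub ν
    have h2 : HasDerivAt (fun t => -z * cosh t - ν * t) (-z * sinh t - ν) t :=
      ((hasDerivAt_cosh t).const_mul (-z)).sub (hasDerivAt_const_mul ν)
    refine (h1.mul h2.exp).congr_deriv ?_
    linear_combination (-z ^ 2 * exp (-z * cosh t - ν * t)) * cosh_sq_sub_sinh_sq t
  have hint := integrableOn_pow_cosh_mul_exp hν hz
  have hH'int : IntegrableOn
      (fun t => (z ^ 2 * cosh t ^ 2 - z * cosh t - (z ^ 2 + ν ^ 2)) * exp (-z * cosh t - ν * t))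
      (Ioi 0) :=
    IntegrableOn.congr_fun ((((hint 2).const_mul (z ^ 2)).sub ((hint 1).const_mul z)).sub
      ((hint 0).const_mul (z ^ 2 + ν ^ 2))) (fun t _ => by simp only [Pi.sub_apply]; ring)
      measurableSet_Ioi
  have hHint : IntegrableOn H (Ioi 0) := by
    refine (((hint 0).const_mul ν).add ((hint 1).const_mul z)).mono' (by fun_prop) ?_
    filter_upwards [ae_restrict_mem measurableSet_Ioi] with t ht
    have hsinh : 0 ≤ sinh t := sinh_nonneg_iff.2 (le_of_lt ht)
    have hsc := sinh_lt_cosh t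
    have habs : |ν - z * sinh t| ≤ ν + z * cosh t := by
      rw [abs_le]; constructor <;> nlinarith
    simp only [H, Pi.add_apply, norm_mul, norm_eq_abs, abs_exp, pow_zero, pow_one, one_mul]
    nlinarith [exp_pos (-z * cosh t - ν * t)]
  have hlim := tendsto_zero_of_hasDerivAt_of_integrableOn_Ioi (fun t _ => hH t) hH'int hHint
  have hlin : z ^ 2 * coshMoment ν 2 z - z * coshMoment ν 1 z - (z ^ 2 + ν ^ 2) * coshMoment ν 0 z
      = ∫ t in Ioi 0,
          (z ^ 2 * cosh t ^ 2 - z * cosh t - (z ^ 2 + ν ^ 2)) * exp (-z * cosh t - ν * t) := by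
    simp only [coshMoment, ← integral_const_mul]
    rw [← integral_sub, ← integral_sub]
    · congr 1; ext t; ring
    all_goals first
      | exact (hint _).const_mul _
      | exact ((hint 2).const_mul _).sub ((hint 1).const_mul _)
  rw [hlin, integral_Ioi_of_hasDerivAt_of_tendsto' (fun t _ => hH t) hH'int hlim]
  simp [H]

noncomputable def besselIDeriv (ν z : ℝ) : ℝ :=
  1 / π * cosMoment ν 1 z + sin (ν * π) / π * coshMoment ν 1 z

noncomputable def besselIDeriv2 (ν z : ℝ) : ℝ :=
  1 / π * cosMoment ν 2 z - sin (ν * π) / π * coshMoment ν 2 z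

lemma besselI_eq_moments (ν : ℝ) :
    besselI ν = fun z => 1 / π * cosMoment ν 0 z - sin (ν * π) / π * coshMoment ν 0 z := by
  ext z; simp [besselI, cosMoment, coshMoment]

lemma hasDerivAt_besselI {ν z : ℝ} (hν : 0 ≤ ν) (hz : 0 < z) :
    HasDerivAt (besselI ν) (besselIDeriv ν z) z := by
  rw [besselI_eq_moments]
  exact (((hasDerivAt_cosMoment ν 0 z).const_mul _).sub
    ((hasDerivAt_coshMoment hν 0 hz).const_mul _)).congr_deriv (by rw [besselIDeriv]; ring)

lemma hasDerivAt_besselIDeriv {ν z : ℝ} (hν : 0 ≤ ν) (hz : 0 < z) :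
    HasDerivAt (besselIDeriv ν) (besselIDeriv2 ν z) z :=
  (((hasDerivAt_cosMoment ν 1 z).const_mul _).add
    ((hasDerivAt_coshMoment hν 1 hz).const_mul _)).congr_deriv (by rw [besselIDeriv2]; ring)

theorem besselI_ode {ν z : ℝ} (hν : 0 ≤ ν) (hz : 0 < z) :
    z ^ 2 * besselIDeriv2 ν z + z * besselIDeriv ν z - (z ^ 2 + ν ^ 2) * besselI ν z = 0 := by
  rw [besselI_eq_moments, besselIDeriv, besselIDeriv2]
  linear_combination 1 / π * cosMoment_bessel_combination ν z -
    sin (ν * π) / π * coshMoment_bessel_combination hν hz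

theorem exists_hasDerivAt_sqrt_mul_comp_pow {f f' f'' : ℝ → ℝ} {c : ℝ} (hc : 0 < c) {m : ℕ}
    (hm : 0 < m)
    (hf : ∀ z, 0 < z → HasDerivAt f (f' z) z) (hf' : ∀ z, 0 < z → HasDerivAt f' (f'' z) z)
    (hode : ∀ z, 0 < z → z ^ 2 * f'' z + z * f' z - (z ^ 2 + (1 / (2 * m)) ^ 2) * f z = 0) :
    ∃ u' : ℝ → ℝ, (∀ x ∈ Ioi 0, HasDerivAt (fun x => √x * f (c * x ^ m)) (u' x) x) ∧
      ∀ x ∈ Ioi 0, HasDerivAt u' ((m * c * x ^ (m - 1)) ^ 2 * (√x * f (c * x ^ m))) x := by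
  obtain ⟨n, rfl⟩ : ∃ n, m = n + 1 := Nat.exists_eq_succ_of_ne_zero hm.ne'
  -- with `z = c x^m`, `u' = f(z)/(2√x) + √x · f'(z) · m c x^{m-1} = (f(z)/2 + m z f'(z)) / √x`
  refine ⟨fun x => (f (c * x ^ (n + 1)) / 2 + (n + 1) * (c * x ^ (n + 1)) * f' (c * x ^ (n + 1)))
    / √x, ?_, ?_⟩
  all_goals
    intro x (hx : 0 < x)
    have hz : 0 < c * x ^ (n + 1) := by positivity
    have hpow : HasDerivAt (fun x => c * x ^ (n + 1)) (c * ((n + 1) * x ^ n)) x := by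
      simpa using (hasDerivAt_pow (n + 1) x).const_mul c
    have hsqrt := hasDerivAt_sqrt hx.ne'
    -- writing `x = s²` turns every `√x` into `s`, so the rest is rational algebra
    obtain ⟨s, hs, rfl⟩ : ∃ s, 0 < s ∧ s ^ 2 = x := ⟨√x, sqrt_pos.2 hx, sq_sqrt hx.le⟩
  · refine (hsqrt.mul ((hf _ hz).comp (s ^ 2) hpow)).congr_deriv ?_
    simp only [Function.comp_apply, sqrt_sq hs.le]
    field_simp
    ring
  · have hf1 := (hf _ hz).comp (s ^ 2) hpow
    have hf2 := (hf' _ hz).comp (s ^ 2) hpow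
    refine (((hf1.div_const 2).add ((hpow.const_mul (n + 1 : ℝ)).mul hf2)).div hsqrt
      (sqrt_pos.2 hx).ne').congr_deriv ?_
    simp only [Function.comp_apply, Pi.add_apply, Pi.mul_apply, sqrt_sq hs.le, Nat.add_sub_cancel]
    push_cast
    field_simp
    linear_combination (norm := skip) (4 * (n + 1) ^ 2) * hode _ hz
    push_cast
    field_simp
    ring

theorem stmt14 (lam : ℝ) (hlam : 0 < lam) :
    ∃ u' : ℝ → ℝ,
      (∀ x ∈ Ioi (0 : ℝ),
        HasDerivAt (fun x : ℝ => Real.sqrt x * besselI (1 / 6) (Real.sqrt lam / 3 * x ^ 3))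
          (u' x) x) ∧
      (∀ x ∈ Ioi (0 : ℝ),
        HasDerivAt u'
          (lam * x ^ 4 * (Real.sqrt x * besselI (1 / 6) (Real.sqrt lam / 3 * x ^ 3)))
          x) := by
  have hν : (0 : ℝ) ≤ 1 / 6 := by norm_num
  obtain ⟨u', hu, hu'⟩ := exists_hasDerivAt_sqrt_mul_comp_pow (m := 3)
    (div_pos (sqrt_pos.2 hlam) three_pos) three_pos
    (fun z hz => hasDerivAt_besselI hν hz) (fun z hz => hasDerivAt_besselIDeriv hν hz)
    (fun z hz => by convert besselI_ode hν hz using 4; norm_num)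
  refine ⟨u', hu, fun x hx => (hu' x hx).congr_deriv ?_⟩
  linear_combination (x ^ 4 * (√x * besselI (1 / 6) (√lam / 3 * x ^ 3))) * sq_sqrt hlam.le
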